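/- Let n ≥ 1, let H ∈ ℂ[x₁,…,xₙ] be a squarefree, nonconstant homogeneous polynomial, and let P ∈ ℂ[x₁,…,xₙ] be any polynomial such that [H,P] = 0, i.e. (∂H/∂xᵢ)(∂P/∂xⱼ) − (∂H/∂xⱼ)(∂P/∂xᵢ) = 0 for all 1 ≤ i < j ≤ n. Then P ∈ ℂ[H], i.e. there exists a univariate polynomial w ∈ ℂ[t] such that P = w(H). -/

import Mathlib

open MvPolynomial

/-!
Split `P` into homogeneous components; since `H` is homogeneous, each component again has
vanishing Jacobian minors with `H`. For a homogeneous `Q` of degree `e > 0`, Euler's identity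
turns the vanishing minors into `e Q ∂ᵢH = (deg H) H ∂ᵢQ`. A prime factor `π` of the
squarefree `H` cannot divide every `∂ᵢH` (some `∂ᵢπ` is nonzero in characteristic zero, and
then `π ∤ ∂ᵢπ` for degree reasons), so `π ∣ Q`; hence `H ∣ Q`. The quotient `Q / H` is
homogeneous of smaller degree with the same property, and induction on the degree gives
`Q ∈ ℂ[H]`.
-/

theorem Squarefree.dvd_of_forall_prime_dvd {R : Type*} [CommMonoidWithZero R]
    [UniqueFactorizationMonoid R] {a b : R} (ha : Squarefree a)
    (h : ∀ p, Prime p → p ∣ a → p ∣ b) : a ∣ b := by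
  induction a using UniqueFactorizationMonoid.induction_on_prime generalizing b with
  | h₁ =>
    nontriviality R
    exact absurd ha not_squarefree_zero
  | h₂ u hu => exact hu.dvd
  | h₃ a p _ hp ih =>
    obtain ⟨c, rfl⟩ := h p hp (dvd_mul_right p a)
    have hpa : ¬p ∣ a := fun hdvd => hp.not_isUnit (ha p (mul_dvd_mul_left p hdvd))
    refine mul_dvd_mul_left p (ih ha.of_mul_right fun q hq hqa => ?_)
    refine (hq.dvd_or_dvd (h q hq (hqa.mul_left p))).resolve_left fun hqp => hpa ?_
    exact (hq.associated_of_dvd hp hqp).symm.dvd.trans hqa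

namespace MvPolynomial

section CommSemiring

variable {σ R : Type*} [CommSemiring R]

theorem totalDegree_pderiv_lt {f : MvPolynomial σ R} {i : σ} (h : pderiv i f ≠ 0) :
    (pderiv i f).totalDegree < f.totalDegree := by
  have hlt : ∀ m ∈ (pderiv i f).support, m.degree < f.totalDegree := fun m hm => by
    have hcoeff : coeff (m + Finsupp.single i 1) f ≠ 0 := fun h0 =>
      mem_support_iff.mp hm (by rw [coeff_pderiv, h0, zero_mul])
    have hdeg : (m + Finsupp.single i 1).degree ≤ f.totalDegree :=
      le_totalDegree (mem_support_iff.mpr hcoeff)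
    rw [map_add, Finsupp.degree_single] at hdeg
    omega
  obtain ⟨m, hm⟩ := support_nonempty.mpr h
  exact (Finset.sup_lt_iff (pos_of_gt (hlt m hm))).mpr hlt

theorem homogeneousComponent_pderiv (m : ℕ) (i : σ) (f : MvPolynomial σ R) :
    homogeneousComponent m (pderiv i f) = pderiv i (homogeneousComponent (m + 1) f) := by
  ext d
  simp [coeff_homogeneousComponent, coeff_pderiv, ite_mul]

theorem eq_C_of_forall_pderiv_eq_zero [NoZeroDivisors R] [CharZero R] {f : MvPolynomial σ R}
    (h : ∀ i, pderiv i f = 0) : f = C (coeff 0 f) := by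
  classical
  ext d
  rcases eq_or_ne d 0 with rfl | hd
  · simp
  obtain ⟨i, hi⟩ := Finsupp.ne_iff.mp hd
  have hle : Finsupp.single i 1 ≤ d := Finsupp.single_le_iff.mpr (Nat.one_le_iff_ne_zero.mpr hi)
  have hcoeff := coeff_pderiv (i := i) f (d - Finsupp.single i 1)
  rw [h i, tsub_add_cancel_of_le hle, coeff_zero, eq_comm, mul_eq_zero] at hcoeff
  rw [coeff_C, if_neg (Ne.symm hd), hcoeff.resolve_right (Nat.cast_add_one_ne_zero _)]

theorem isHomogeneous_of_forall_homogeneousComponent_eq_zero {f : MvPolynomial σ R} {n : ℕ}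
    (h : ∀ k ≠ n, homogeneousComponent k f = 0) : f.IsHomogeneous n := by
  suffices f = homogeneousComponent n f from this ▸ homogeneousComponent_isHomogeneous n f
  ext d
  rw [coeff_homogeneousComponent]
  split_ifs with hd
  · rfl
  · simpa [coeff_homogeneousComponent] using congr(coeff d $(h d.degree hd))

attribute [local instance] gradedAlgebra in
theorem IsHomogeneous.homogeneousComponent_add_mul {H : MvPolynomial σ R} {d : ℕ}
    (hH : H.IsHomogeneous d) (k : ℕ) (f : MvPolynomial σ R) :
    homogeneousComponent (d + k) (H * f) = H * homogeneousComponent k f := by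
  simpa [← decomposition.decompose'_apply] using
    DirectSum.coe_decompose_mul_add_of_left_mem (homogeneousSubmodule σ R) (b := f) (j := k) hH

-- If `e < d` then `f = 0`, so the truncated `e - d` is harmless.
theorem IsHomogeneous.of_mul_left [NoZeroDivisors R] {H f : MvPolynomial σ R} {d e : ℕ}
    (hH : H.IsHomogeneous d) (hH0 : H ≠ 0) (hHf : (H * f).IsHomogeneous e) :
    f.IsHomogeneous (e - d) :=
  isHomogeneous_of_forall_homogeneousComponent_eq_zero fun k hk => by
    have hcomp := hH.homogeneousComponent_add_mul k f
    rw [homogeneousComponent_of_mem hHf, if_neg (by omega)] at hcomp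
    exact (mul_eq_zero.mp hcomp.symm).resolve_left hH0

end CommSemiring

section CommRing

variable {σ R : Type*} [CommRing R]

theorem not_dvd_pderiv [IsDomain R] {f : MvPolynomial σ R} {i : σ} (h : pderiv i f ≠ 0) :
    ¬f ∣ pderiv i f := fun hdvd =>
  (totalDegree_le_of_dvd_of_isDomain hdvd h).not_gt (totalDegree_pderiv_lt h)

theorem exists_not_dvd_pderiv_of_prime_dvd {K : Type*} [Field K] [CharZero K]
    {π H : MvPolynomial σ K} (hπ : Prime π) (hH : Squarefree H) (hπH : π ∣ H) :
    ∃ i, ¬π ∣ pderiv i H := by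
  obtain ⟨i, hi⟩ : ∃ i, pderiv i π ≠ 0 := by
    by_contra! hall
    rw [eq_C_of_forall_pderiv_eq_zero hall] at hπ
    rcases eq_or_ne (coeff 0 π) 0 with h0 | h0
    · exact not_prime_zero (by rwa [h0, map_zero] at hπ)
    · exact hπ.not_isUnit ((isUnit_iff_ne_zero.mpr h0).map C)
  obtain ⟨g, rfl⟩ := hπH
  have hπg : ¬π ∣ g := fun hdvd => hπ.not_isUnit (hH π (mul_dvd_mul_left π hdvd))
  refine ⟨i, fun hdvd => ?_⟩
  rw [pderiv_mul, dvd_add_left (dvd_mul_right π _)] at hdvd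
  exact (hπ.dvd_or_dvd hdvd).elim (not_dvd_pderiv hi) hπg

def JacobianMinorsVanish (f g : MvPolynomial σ R) : Prop :=
  ∀ i j, pderiv i f * pderiv j g - pderiv j f * pderiv i g = 0

namespace JacobianMinorsVanish

variable {H f : MvPolynomial σ R}

theorem homogeneousComponent_right {d : ℕ} (hH : H.IsHomogeneous d)
    (h : JacobianMinorsVanish H f) (k : ℕ) :
    JacobianMinorsVanish H (homogeneousComponent k f) := by
  intro i j
  cases k with
  | zero => simp
  | succ m =>
    have hcomp := congr(homogeneousComponent (d - 1 + m) $(h i j))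
    rwa [map_sub, hH.pderiv.homogeneousComponent_add_mul, hH.pderiv.homogeneousComponent_add_mul,
      homogeneousComponent_pderiv, homogeneousComponent_pderiv, map_zero] at hcomp

theorem of_mul_left [IsDomain R] (h : JacobianMinorsVanish H (H * f)) (hH0 : H ≠ 0) :
    JacobianMinorsVanish H f := by
  intro i j
  have hHf := h i j
  rw [pderiv_mul, pderiv_mul] at hHf
  refine (mul_eq_zero.mp ?_).resolve_left hH0
  linear_combination hHf

theorem natCast_mul_mul_pderiv [Fintype σ] {d e : ℕ} (hH : H.IsHomogeneous d)
    (hf : f.IsHomogeneous e) (h : JacobianMinorsVanish H f) (i : σ) :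
    (e : MvPolynomial σ R) * f * pderiv i H = d * H * pderiv i f :=
  calc (e : MvPolynomial σ R) * f * pderiv i H = (∑ j, X j * pderiv j f) * pderiv i H := by
        rw [hf.sum_X_mul_pderiv, nsmul_eq_mul]
    _ = (∑ j, X j * pderiv j H) * pderiv i f := by
        simp_rw [Finset.sum_mul]
        exact Finset.sum_congr rfl fun j _ => by linear_combination X j * h i j
    _ = d * H * pderiv i f := by rw [hH.sum_X_mul_pderiv, nsmul_eq_mul]

variable {K : Type*} [Field K] [CharZero K] [Fintype σ] {H f : MvPolynomial σ K}

theorem dvd_of_isHomogeneous {d e : ℕ} (hHsf : Squarefree H) (hH : H.IsHomogeneous d)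
    (hf : f.IsHomogeneous e) (he : e ≠ 0) (h : JacobianMinorsVanish H f) : H ∣ f := by
  refine hHsf.dvd_of_forall_prime_dvd fun π hπ hπH => ?_
  obtain ⟨i, hi⟩ := exists_not_dvd_pderiv_of_prime_dvd hπ hHsf hπH
  have he_unit : IsUnit (e : MvPolynomial σ K) := by
    rw [← map_natCast C]
    exact (isUnit_iff_ne_zero.mpr (Nat.cast_ne_zero.mpr he)).map C
  have hdvd : π ∣ (e : MvPolynomial σ K) * f * pderiv i H := by
    rw [h.natCast_mul_mul_pderiv hH hf]
    exact (hπH.mul_left _).mul_right _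
  rcases hπ.dvd_or_dvd hdvd with hef | hHi
  · exact (hπ.dvd_or_dvd hef).resolve_left fun hπe =>
      hπ.not_isUnit (isUnit_of_dvd_unit hπe he_unit)
  · exact absurd hHi hi

theorem exists_eq_aeval_of_isHomogeneous {d : ℕ} (hHsf : Squarefree H) (hH : H.IsHomogeneous d)
    (hd : 0 < d) {e : ℕ} (hf : f.IsHomogeneous e) (h : JacobianMinorsVanish H f) :
    ∃ w : Polynomial K, f = Polynomial.aeval H w := by
  induction e using Nat.strong_induction_on generalizing f with
  | _ e ih =>
  rcases Nat.eq_zero_or_pos e with rfl | he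
  · refine ⟨Polynomial.C (coeff 0 f), ?_⟩
    rw [Polynomial.aeval_C, algebraMap_eq, ← homogeneousComponent_zero,
      homogeneousComponent_eq_self hf]
  · obtain ⟨g, rfl⟩ := h.dvd_of_isHomogeneous hHsf hH hf he.ne'
    obtain ⟨w, rfl⟩ := ih (e - d) (by omega) (hH.of_mul_left hHsf.ne_zero hf)
      (h.of_mul_left hHsf.ne_zero)
    exact ⟨Polynomial.X * w, by rw [map_mul, Polynomial.aeval_X]⟩

theorem exists_eq_aeval {d : ℕ} (hHsf : Squarefree H) (hH : H.IsHomogeneous d) (hd : 0 < d)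
    (h : JacobianMinorsVanish H f) : ∃ w : Polynomial K, f = Polynomial.aeval H w := by
  choose w hw using fun k => exists_eq_aeval_of_isHomogeneous hHsf hH hd
    (homogeneousComponent_isHomogeneous k f) (h.homogeneousComponent_right hH k)
  refine ⟨∑ k ∈ Finset.range (f.totalDegree + 1), w k, ?_⟩
  rw [map_sum, ← Finset.sum_congr rfl fun k _ => hw k, sum_homogeneousComponent]

end JacobianMinorsVanish

end CommRing

end MvPolynomial

theorem stmt1_general (n : ℕ) (H : MvPolynomial (Fin n) ℂ) (dH : ℕ)
    (hHsf : Squarefree H) (hHhom : H.IsHomogeneous dH) (hdH : 0 < dH)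
    (P : MvPolynomial (Fin n) ℂ)
    (hbr : ∀ i j : Fin n, pderiv i H * pderiv j P - pderiv j H * pderiv i P = 0) :
    ∃ w : Polynomial ℂ, P = Polynomial.aeval H w :=
  JacobianMinorsVanish.exists_eq_aeval hHsf hHhom hdH hbr

theorem stmt1 (n : ℕ) (hn : 1 ≤ n) (H : MvPolynomial (Fin n) ℂ) (dH : ℕ)
    (hHsf : Squarefree H) (hHhom : H.IsHomogeneous dH) (hdH : 0 < dH)
    (P : MvPolynomial (Fin n) ℂ)
    (hbr : ∀ i j : Fin n, pderiv i H * pderiv j P - pderiv j H * pderiv i P = 0) :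
    ∃ w : Polynomial ℂ, P = Polynomial.aeval H w :=
  stmt1_general n H dH hHsf hHhom hdH P hbr
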